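/- arXiv:1604.02361 — 2 statements merged into one kernel-verified Lean document; each statement's English description precedes it below -/
import Mathlib

section
/- Let n ≥ 2 and let b_1, …, b_n be complex weights with b_n ≠ 0. Let F^a : ℕ → ℂ be the sequence generated from initial conditions a = (a_0, …, a_{n-1}) ∈ ℂ^n, and let F^0 : ℕ → ℂ be the sequence generated from the initial conditions (0, …, 0, 1) (i.e. F^0(k) = 0 for 0 ≤ k ≤ n−2 and F^0(n−1) = 1). Then for every k ≥ n−1 one has the representation F^a(k) = a_{n-1}·F^0(k) + Σ_{i=1}^{n-1} a_{n-1-i} · Σ_{j=1}^{n-i} b_{i+j}·F^0(k−j). -/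
/-!
Since `F0` vanishes below `n - 1`, its recurrence extends to every index with an impulse:
`F0 m = ∑ₚ bₚ F0 (m - p) + [m = n - 1]`. Substituting this into `fundamentalRep` shows that it
satisfies the recurrence up to impulse terms at the indices `n, …, 2n - 2`, and these are exactly
the contributions `∑ₚ bₚ a (k - p)` of the initial values `a 0, …, a (n - 2)`. So `fundamentalRep`
plus `a` restricted to the indices below `n - 1` solves the recurrence with the initial values
of `Fa`, hence is `Fa`.
-/

open Finset

variable {R : Type*} [CommSemiring R]

def IsLinRecSol (b : ℕ → R) (n : ℕ) (F : ℕ → R) : Prop :=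
  ∀ k, n ≤ k → F k = ∑ p ∈ Icc 1 n, b p * F (k - p)

namespace IsLinRecSol

variable {b : ℕ → R} {n : ℕ}

theorem eq_of_eq_init {F G : ℕ → R} (hF : IsLinRecSol b n F) (hG : IsLinRecSol b n G)
    (hinit : ∀ k < n, F k = G k) : F = G := by
  funext k
  induction k using Nat.strong_induction_on with
  | _ k ih =>
    rcases lt_or_ge k n with hk | hk
    · exact hinit k hk
    · rw [hF k hk, hG k hk]
      refine sum_congr rfl fun p hp => ?_
      rw [ih (k - p) (by rw [mem_Icc] at hp; omega)]

theorem eq_sum_add_ite {F : ℕ → R} (hF : IsLinRecSol b n F) (hn : 2 ≤ n)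
    (hzero : ∀ k < n - 1, F k = 0) (hone : F (n - 1) = 1) (m : ℕ) :
    F m = ∑ p ∈ Icc 1 n, b p * F (m - p) + if m = n - 1 then 1 else 0 := by
  rcases lt_or_ge m n with hm | hm
  · -- for `p > m` the truncated index `m - p` is `0`, where `F` vanishes because `n ≥ 2`
    have hsum : ∑ p ∈ Icc 1 n, b p * F (m - p) = 0 :=
      sum_eq_zero fun p hp => by rw [hzero (m - p) (by rw [mem_Icc] at hp; omega), mul_zero]
    rcases eq_or_ne m (n - 1) with rfl | hm'
    · rw [hone, if_pos rfl, hsum, zero_add]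
    · rw [hzero m (by omega), if_neg hm', hsum, zero_add]
  · rw [if_neg (by omega), add_zero, hF m hm]

end IsLinRecSol

theorem sum_impulse_eq_sum_initial (a b : ℕ → R) {n k : ℕ} (hk : n ≤ k) :
    ∑ i ∈ Icc 1 (n - 1), a (n - 1 - i) *
        ∑ j ∈ Icc 1 (n - i), b (i + j) * (if k - j = n - 1 then 1 else 0) =
      ∑ p ∈ Icc 1 n, b p * (if k - p < n - 1 then a (k - p) else 0) := by
  set d := k - (n - 1)
  have hinner : ∀ i ∈ Icc 1 (n - 1),
      a (n - 1 - i) * ∑ j ∈ Icc 1 (n - i), b (i + j) * (if k - j = n - 1 then 1 else 0) =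
        if d ≤ n - i then b (i + d) * a (n - 1 - i) else 0 := by
    intro i hi
    rw [mem_Icc] at hi
    have hj : ∀ j ∈ Icc 1 (n - i),
        b (i + j) * (if k - j = n - 1 then 1 else 0) = if d = j then b (i + j) else 0 := by
      intro j hj
      rw [mem_Icc] at hj
      rw [mul_ite, mul_one, mul_zero]
      exact if_congr (by omega) rfl rfl
    rw [sum_congr rfl hj, sum_ite_eq]
    by_cases h : d ≤ n - i
    · rw [if_pos (mem_Icc.2 ⟨by omega, h⟩), if_pos h, mul_comm]
    · rw [if_neg (by rw [mem_Icc]; omega), if_neg h, mul_zero]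
  rw [sum_congr rfl hinner, ← sum_filter]
  simp only [mul_ite, mul_zero]
  rw [← sum_filter]
  have hset : (Icc 1 n).filter (fun p => k - p < n - 1) =
      ((Icc 1 (n - 1)).filter (fun i => d ≤ n - i)).map (addRightEmbedding d) := by
    ext p
    simp only [mem_filter, mem_Icc, mem_map, addRightEmbedding_apply]
    constructor
    · intro hp
      exact ⟨p - d, by omega, by omega⟩
    · rintro ⟨i, hi, rfl⟩
      omega
  rw [hset, sum_map]
  refine sum_congr rfl fun i hi => ?_
  rw [mem_filter, mem_Icc] at hi
  rw [addRightEmbedding_apply, show k - (i + d) = n - 1 - i by omega]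

def fundamentalRep (n : ℕ) (a b F0 : ℕ → R) (k : ℕ) : R :=
  a (n - 1) * F0 k +
    ∑ i ∈ Icc 1 (n - 1), a (n - 1 - i) * ∑ j ∈ Icc 1 (n - i), b (i + j) * F0 (k - j)

section fundamentalRep

variable {n : ℕ} {a b F0 : ℕ → R}

theorem fundamentalRep_of_lt (hzero : ∀ k < n - 1, F0 k = 0) {m : ℕ} (hm : m < n - 1) :
    fundamentalRep n a b F0 m = 0 := by
  rw [fundamentalRep, hzero m hm, mul_zero, zero_add]
  refine sum_eq_zero fun i _ => ?_
  rw [sum_eq_zero fun j _ => by rw [hzero (m - j) (by omega), mul_zero], mul_zero]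

theorem fundamentalRep_self (hzero : ∀ k < n - 1, F0 k = 0) (hone : F0 (n - 1) = 1) :
    fundamentalRep n a b F0 (n - 1) = a (n - 1) := by
  rw [fundamentalRep, hone, mul_one, sum_eq_zero, add_zero]
  intro i hi
  rw [mem_Icc] at hi
  refine mul_eq_zero_of_right _ (sum_eq_zero fun j hj => ?_)
  rw [mem_Icc] at hj
  rw [hzero (n - 1 - j) (by omega), mul_zero]

theorem sum_mul_fundamentalRep_sub (k : ℕ) :
    ∑ p ∈ Icc 1 n, b p * fundamentalRep n a b F0 (k - p) =
      a (n - 1) * ∑ p ∈ Icc 1 n, b p * F0 (k - p) +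
        ∑ i ∈ Icc 1 (n - 1), a (n - 1 - i) *
          ∑ j ∈ Icc 1 (n - i), b (i + j) * ∑ p ∈ Icc 1 n, b p * F0 (k - j - p) := by
  simp only [fundamentalRep, mul_add, mul_sum, sum_add_distrib]
  congr 1
  · exact sum_congr rfl fun p _ => by ring
  · rw [sum_comm]
    refine sum_congr rfl fun i _ => ?_
    rw [sum_comm]
    refine sum_congr rfl fun j _ => sum_congr rfl fun p _ => ?_
    rw [Nat.sub_right_comm k p j]
    ring

theorem isLinRecSol_fundamentalRep_add (hF0 : IsLinRecSol b n F0) (hn : 2 ≤ n)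
    (hzero : ∀ k < n - 1, F0 k = 0) (hone : F0 (n - 1) = 1) :
    IsLinRecSol b n (fun k => fundamentalRep n a b F0 k + if k < n - 1 then a k else 0) := by
  intro k hk
  simp only [mul_add, sum_add_distrib, if_neg (show ¬k < n - 1 by omega), add_zero]
  rw [← sum_impulse_eq_sum_initial a b hk, sum_mul_fundamentalRep_sub, fundamentalRep,
    hF0 k hk, add_assoc, ← sum_add_distrib]
  congr 1
  refine sum_congr rfl fun i _ => ?_
  rw [← mul_add, ← sum_add_distrib]
  congr 1
  refine sum_congr rfl fun j _ => ?_
  rw [← mul_add, ← hF0.eq_sum_add_ite hn hzero hone]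

end fundamentalRep

theorem representation_by_fundamental_sequence_general
    (n : ℕ) (hn : 2 ≤ n) (b : ℕ → ℂ)
    (a : ℕ → ℂ) (Fa F0 : ℕ → ℂ)
    (hainit : ∀ k < n, Fa k = a k)
    (harec : ∀ k, n ≤ k → Fa k = ∑ i ∈ Finset.Icc 1 n, b i * Fa (k - i))
    (h0init : ∀ k < n - 1, F0 k = 0) (h0last : F0 (n - 1) = 1)
    (h0rec : ∀ k, n ≤ k → F0 k = ∑ i ∈ Finset.Icc 1 n, b i * F0 (k - i)) :
    ∀ k, n - 1 ≤ k →
      Fa k = a (n - 1) * F0 k +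
        ∑ i ∈ Finset.Icc 1 (n - 1), a (n - 1 - i) *
          ∑ j ∈ Finset.Icc 1 (n - i), b (i + j) * F0 (k - j) := by
  have hinit : ∀ k < n, Fa k = fundamentalRep n a b F0 k + if k < n - 1 then a k else 0 := by
    intro k hk
    rw [hainit k hk]
    rcases lt_or_eq_of_le (Nat.le_sub_one_of_lt hk) with hk' | rfl
    · rw [fundamentalRep_of_lt h0init hk', if_pos hk', zero_add]
    · rw [fundamentalRep_self h0init h0last, if_neg (lt_irrefl _), add_zero]
  have hFa := IsLinRecSol.eq_of_eq_init harec
    (isLinRecSol_fundamentalRep_add h0rec hn h0init h0last) hinit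
  intro k hk
  simp only [hFa, if_neg (not_lt.2 hk), add_zero]
  rfl

/-- Representation of a sequence generated from arbitrary initial
conditions `a` in terms of the sequence `F0` generated from `(0, …, 0, 1)`:
for `k ≥ n - 1`,
`Fa k = a (n-1) * F0 k + ∑_{i=1}^{n-1} a (n-1-i) * ∑_{j=1}^{n-i} b (i+j) * F0 (k-j)`. -/
theorem representation_by_fundamental_sequence
    (n : ℕ) (hn : 2 ≤ n) (b : ℕ → ℂ) (hbn : b n ≠ 0)
    (a : ℕ → ℂ) (Fa F0 : ℕ → ℂ)
    (hainit : ∀ k < n, Fa k = a k)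
    (harec : ∀ k, n ≤ k → Fa k = ∑ i ∈ Finset.Icc 1 n, b i * Fa (k - i))
    (h0init : ∀ k < n - 1, F0 k = 0) (h0last : F0 (n - 1) = 1)
    (h0rec : ∀ k, n ≤ k → F0 k = ∑ i ∈ Finset.Icc 1 n, b i * F0 (k - i)) :
    ∀ k, n - 1 ≤ k →
      Fa k = a (n - 1) * F0 k +
        ∑ i ∈ Finset.Icc 1 (n - 1), a (n - 1 - i) *
          ∑ j ∈ Finset.Icc 1 (n - i), b (i + j) * F0 (k - j) :=
  representation_by_fundamental_sequence_general n hn b a Fa F0 hainit harec h0init h0last h0rec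
end

section
/- Let n ≥ 2 and let b_1, …, b_n be complex weights with b_n ≠ 0 whose characteristic polynomial p(λ) = λ^n − b_1·λ^{n−1} − ⋯ − b_n is asymptotically simple with distinguished root λ_0 (among the roots of p of maximal modulus, λ_0 is the unique one of maximal multiplicity). Then the sequence F^0 generated from initial conditions (0, …, 0, 1) satisfies: there exists k_0 ∈ ℕ such that F^0(k) ≠ 0 for all k > k_0, and F^0(k+1)/F^0(k) → λ_0 as k → ∞. -/
/-!
The reversed characteristic polynomial `Q = 1 - ∑ bᵢ Xⁱ = ∏_μ (1 - μX)^{m_μ}` turns the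
recurrence into the identity `Q · ∑ F⁰(k) Xᵏ = X^{n-1}` of power series. Partial fractions
split `X^{n-1} / Q` into a polynomial plus `∑_μ ∑_{d < m_μ} a_{μ,d} (1 - μX)^{-(d+1)}`, so that
`F⁰(k) = ∑ a_{μ,d} C(k+d, d) μᵏ` for large `k`, and evaluating at `X = μ⁻¹` shows that the top
coefficient `a_{μ, m_μ - 1}` does not vanish. After division by `C(k+e, e) λ₀ᵏ`, `e = m_{λ₀} - 1`,
every other term tends to `0`: its root is either strictly smaller in modulus, or lies on the
circle `|μ| = |λ₀|` and then has `d < e`. So `F⁰(k) ∼ a_{λ₀,e} C(k+e, e) λ₀ᵏ`, and the ratio of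
consecutive terms tends to `λ₀`.
-/

open Polynomial Filter Finset
open scoped Topology PowerSeries

section PowerSeries

variable {R K : Type*} [CommRing R] [Field K]

@[norm_cast]
theorem Polynomial.coe_sum {ι : Type*} (s : Finset ι) (p : ι → R[X]) :
    ((∑ i ∈ s, p i : R[X]) : R⟦X⟧) = ∑ i ∈ s, (p i : R⟦X⟧) :=
  map_sum coeToPowerSeries.ringHom p s

@[norm_cast]
theorem Polynomial.coe_prod {ι : Type*} (s : Finset ι) (p : ι → R[X]) :
    ((∏ i ∈ s, p i : R[X]) : R⟦X⟧) = ∏ i ∈ s, (p i : R⟦X⟧) :=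
  map_prod coeToPowerSeries.ringHom p s

noncomputable def invOneSubCMulXPow (μ : R) (d : ℕ) : R⟦X⟧ :=
  PowerSeries.mk fun k => ((k + d).choose d : R) * μ ^ k

theorem one_sub_C_mul_X_pow_mul_invOneSubCMulXPow (μ : R) (d : ℕ) :
    (1 - PowerSeries.C μ * PowerSeries.X) ^ (d + 1) * invOneSubCMulXPow μ d = 1 := by
  have h := congrArg (PowerSeries.rescale μ) (PowerSeries.invOneSubPow R (d + 1)).inv_val
  rw [PowerSeries.invOneSubPow_inv_eq_one_sub_pow, map_mul, map_pow, map_sub, map_one,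
    PowerSeries.rescale_X] at h
  convert h using 2
  ext k
  simp [invOneSubCMulXPow, PowerSeries.coeff_rescale,
    PowerSeries.invOneSubPow_val_succ_eq_mk_add_choose, add_comm, mul_comm]

theorem one_sub_C_mul_X_mul_invOneSubCMulXPow_succ (μ : R) (d : ℕ) :
    (1 - PowerSeries.C μ * PowerSeries.X) * invOneSubCMulXPow μ (d + 1) =
      invOneSubCMulXPow μ d := by
  have hu := IsUnit.of_mul_eq_one _ (one_sub_C_mul_X_pow_mul_invOneSubCMulXPow μ d)
  refine hu.mul_left_cancel ?_
  rw [← mul_assoc, ← pow_succ, one_sub_C_mul_X_pow_mul_invOneSubCMulXPow,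
    one_sub_C_mul_X_pow_mul_invOneSubCMulXPow]

theorem exists_coe_eq_C_eval_inv_add_one_sub_C_mul_X_mul (ν : K) (r : K[X]) :
    ∃ r₁ : K[X], (r : K⟦X⟧) =
      PowerSeries.C (r.eval ν⁻¹) + (1 - PowerSeries.C ν * PowerSeries.X) * (r₁ : K⟦X⟧) := by
  suffices ∃ r₁ : K[X], r = C (r.eval ν⁻¹) + (1 - C ν * X) * r₁ by
    obtain ⟨r₁, hr⟩ := this
    refine ⟨r₁, ?_⟩
    conv_lhs => rw [hr]
    push_cast
    rfl
  rcases eq_or_ne ν 0 with rfl | hν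
  · exact ⟨r - C (r.eval 0⁻¹), by simp⟩
  obtain ⟨q, hq⟩ := X_sub_C_dvd_sub_C_eval (a := ν⁻¹) (p := r)
  have hC : C ν * C ν⁻¹ = 1 := by rw [← C_mul, mul_inv_cancel₀ hν, C_1]
  exact ⟨-C ν⁻¹ * q, by linear_combination hq - X * q * hC⟩

theorem exists_coe_mul_invOneSubCMulXPow_eq (ν : K) (m : ℕ) (r : K[X]) :
    ∃ (q : K[X]) (a : ℕ → K), (r : K⟦X⟧) * invOneSubCMulXPow ν m =
      q + ∑ d ∈ range (m + 1), PowerSeries.C (a d) * invOneSubCMulXPow ν d ∧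
      a m = r.eval ν⁻¹ := by
  obtain ⟨r₁, hr⟩ := exists_coe_eq_C_eval_inv_add_one_sub_C_mul_X_mul ν r
  induction m generalizing r r₁ with
  | zero =>
    refine ⟨r₁, fun _ => r.eval ν⁻¹, ?_, rfl⟩
    have h0 := one_sub_C_mul_X_pow_mul_invOneSubCMulXPow ν 0
    rw [zero_add, pow_one] at h0
    rw [hr, zero_add, sum_range_one]
    linear_combination (r₁ : K⟦X⟧) * h0
  | succ m ih =>
    obtain ⟨r₂, hr₁⟩ := exists_coe_eq_C_eval_inv_add_one_sub_C_mul_X_mul ν r₁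
    obtain ⟨q, a, hqa, -⟩ := ih r₁ r₂ hr₁
    refine ⟨q, Function.update a (m + 1) (r.eval ν⁻¹), ?_, by simp⟩
    rw [sum_range_succ, Function.update_self,
      sum_congr rfl fun d hd => by
        rw [Function.update_of_ne (by simp at hd; omega)], ← add_assoc, ← hqa, hr,
      ← one_sub_C_mul_X_mul_invOneSubCMulXPow_succ ν m]
    ring

theorem isCoprime_one_sub_C_mul_X {i j : K} (hij : i ≠ j) :
    IsCoprime (1 - C i * X) (1 - C j * X) := by
  have h : C (j - i)⁻¹ * (C j - C i) = 1 := by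
    rw [← C_sub, ← C_mul, inv_mul_cancel₀ (sub_ne_zero.2 hij.symm), C_1]
  exact ⟨C (j - i)⁻¹ * C j, -(C (j - i)⁻¹ * C i), by linear_combination h⟩

theorem eval_inv_mul_prod_erase_eq_one [DecidableEq K] {s : Finset K} {m : K → ℕ}
    {c : K → K[X]} (hc : ∑ μ ∈ s, c μ * ∏ ν ∈ s.erase μ, (1 - C ν * X) ^ m ν = 1) {μ : K}
    (hμ : μ ∈ s) (hμ0 : μ ≠ 0) (hm : 1 ≤ m μ) :
    (c μ).eval μ⁻¹ * ∏ ν ∈ s.erase μ, (1 - ν * μ⁻¹) ^ m ν = 1 := by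
  have hpole : (1 - μ * μ⁻¹) ^ m μ = 0 := by
    rw [mul_inv_cancel₀ hμ0, sub_self, zero_pow (by omega)]
  have := congrArg (eval μ⁻¹) hc
  rw [eval_finsetSum, sum_eq_single μ] at this
  · simpa [eval_prod] using this
  · intro ν _ hνμ
    rw [eval_mul, eval_prod, prod_eq_zero (mem_erase.2 ⟨hνμ.symm, hμ⟩) (by simpa using hpole),
      mul_zero]
  · exact fun h => absurd hμ h

theorem exists_mk_eq_sum_coe_mul_invOneSubCMulXPow [DecidableEq K] (s : Finset K)
    (hs : s.Nonempty) (hs0 : ∀ μ ∈ s, μ ≠ 0) (m : K → ℕ) (hm : ∀ μ ∈ s, 1 ≤ m μ) (f : K[X])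
    (F : ℕ → K)
    (hF : ((∏ μ ∈ s, (1 - C μ * X) ^ m μ : K[X]) : K⟦X⟧) * PowerSeries.mk F = f) :
    ∃ r : K → K[X],
      PowerSeries.mk F = ∑ μ ∈ s, (r μ : K⟦X⟧) * invOneSubCMulXPow μ (m μ - 1) ∧
      ∀ μ ∈ s, (r μ).eval μ⁻¹ * ∏ ν ∈ s.erase μ, (1 - ν * μ⁻¹) ^ m ν = f.eval μ⁻¹ := by
  set g : K → K[X] := fun μ => (1 - C μ * X) ^ m μ with hg
  set V : K → K⟦X⟧ := fun μ => invOneSubCMulXPow μ (m μ - 1) with hV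
  have hgV : ∀ μ ∈ s, (g μ : K⟦X⟧) * V μ = 1 := fun μ hμ => by
    have := one_sub_C_mul_X_pow_mul_invOneSubCMulXPow μ (m μ - 1)
    rw [Nat.sub_add_cancel (hm μ hμ)] at this
    simp only [hg, hV]
    push_cast
    exact this
  have hprod : ∀ μ ∈ s, (∏ ν ∈ s.erase μ, (g ν : K⟦X⟧)) * ∏ ν ∈ s, V ν = V μ := by
    intro μ hμ
    rw [← mul_prod_erase s V hμ, mul_left_comm, ← prod_mul_distrib,
      prod_congr rfl fun ν hν => hgV ν (mem_of_mem_erase hν), prod_const_one, mul_one]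
  -- the partial fraction decomposition of `1 / ∏ gμ`
  obtain ⟨c, hc⟩ := (exists_sum_eq_one_iff_pairwise_coprime hs (s := g)).2 fun i j hij =>
    (isCoprime_one_sub_C_mul_X fun h => hij (Subtype.ext h)).pow
  simp only [sdiff_singleton_eq_erase] at hc
  refine ⟨fun μ => f * c μ, ?_, fun μ hμ => ?_⟩
  · calc PowerSeries.mk F = (f : K⟦X⟧) * ∏ ν ∈ s, V ν := by
          rw [← hF, mul_right_comm, Polynomial.coe_prod, ← prod_mul_distrib, prod_congr rfl hgV,
            prod_const_one, one_mul]
      _ = ((f * ∑ μ ∈ s, c μ * ∏ ν ∈ s.erase μ, g ν : K[X]) : K⟦X⟧) * ∏ ν ∈ s, V ν := by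
          rw [hc, mul_one]
      _ = _ := by
          push_cast
          rw [mul_sum, sum_mul]
          refine sum_congr rfl fun μ hμ => ?_
          linear_combination (f * c μ : K⟦X⟧) * hprod μ hμ
  · rw [eval_mul, mul_assoc, eval_inv_mul_prod_erase_eq_one hc hμ (hs0 μ hμ) (hm μ hμ), mul_one]

theorem exists_eventually_eq_sum_choose_mul_pow [DecidableEq K] (s : Finset K)
    (hs : s.Nonempty) (hs0 : ∀ μ ∈ s, μ ≠ 0) (m : K → ℕ) (hm : ∀ μ ∈ s, 1 ≤ m μ) (f : K[X])
    (F : ℕ → K)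
    (hF : ((∏ μ ∈ s, (1 - C μ * X) ^ m μ : K[X]) : K⟦X⟧) * PowerSeries.mk F = f) :
    ∃ a : K → ℕ → K,
      (∀ μ ∈ s, a μ (m μ - 1) * ∏ ν ∈ s.erase μ, (1 - ν * μ⁻¹) ^ m ν = f.eval μ⁻¹) ∧
      ∀ᶠ k in atTop, F k = ∑ μ ∈ s, ∑ d ∈ range (m μ), a μ d * ((k + d).choose d * μ ^ k) := by
  obtain ⟨r, hmk, hr⟩ := exists_mk_eq_sum_coe_mul_invOneSubCMulXPow s hs hs0 m hm f F hF
  choose q a hqa ha using fun μ => exists_coe_mul_invOneSubCMulXPow_eq μ (m μ - 1) (r μ)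
  refine ⟨a, fun μ hμ => by rw [ha, hr μ hμ], ?_⟩
  have hq : ∀ᶠ k in atTop, ∀ μ ∈ s, (q μ).coeff k = 0 :=
    (eventually_all_finset s).2 fun μ _ =>
      (eventually_gt_atTop (q μ).natDegree).mono fun k hk => coeff_eq_zero_of_natDegree_lt hk
  filter_upwards [hq] with k hk
  have hF := congrArg (PowerSeries.coeff k) hmk
  rw [PowerSeries.coeff_mk] at hF
  rw [hF, map_sum]
  refine sum_congr rfl fun μ hμ => ?_
  rw [hqa, map_add, Polynomial.coeff_coe, hk μ hμ, zero_add, Nat.sub_add_cancel (hm μ hμ),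
    map_sum]
  simp [invOneSubCMulXPow, PowerSeries.coeff_C_mul]

end PowerSeries

section LinearRecurrence

variable {R K : Type*} [CommRing R] [Field K]

noncomputable def linRecCharPoly (n : ℕ) (b : ℕ → R) : R[X] :=
  X ^ n - ∑ i ∈ Icc 1 n, C (b i) * X ^ (n - i)

theorem degree_sum_C_mul_X_pow_sub_lt (n : ℕ) (b : ℕ → R) :
    (∑ i ∈ Icc 1 n, C (b i) * X ^ (n - i)).degree < (n : WithBot ℕ) := by
  refine (degree_sum_le _ _).trans_lt
    ((Finset.sup_lt_iff (WithBot.bot_lt_coe n)).2 fun i hi => ?_)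
  refine (degree_C_mul_X_pow_le _ _).trans_lt ?_
  have := mem_Icc.1 hi
  exact Nat.cast_lt.2 (by omega)

theorem linRecCharPoly_monic [Nontrivial R] (n : ℕ) (b : ℕ → R) : (linRecCharPoly n b).Monic :=
  monic_X_pow_sub (degree_sum_C_mul_X_pow_sub_lt n b)

theorem natDegree_linRecCharPoly [Nontrivial R] (n : ℕ) (b : ℕ → R) :
    (linRecCharPoly n b).natDegree = n := by
  have h := degree_sum_C_mul_X_pow_sub_lt n b
  rw [← degree_X_pow (R := R)] at h
  exact natDegree_eq_of_degree_eq_some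
    (by rw [linRecCharPoly, degree_sub_eq_left_of_degree_lt h, degree_X_pow])

theorem reverse_linRecCharPoly [Nontrivial R] (n : ℕ) (b : ℕ → R) :
    (linRecCharPoly n b).reverse = 1 - ∑ i ∈ Icc 1 n, C (b i) * X ^ i := by
  have hsum : reflect n (∑ i ∈ Icc 1 n, C (b i) * X ^ (n - i)) =
      ∑ i ∈ Icc 1 n, reflect n (C (b i) * X ^ (n - i)) :=
    map_sum (AddMonoidHom.mk' (reflect n) fun p q => reflect_add p q n : R[X] →+ R[X])
      (fun i => C (b i) * X ^ (n - i)) (Icc 1 n)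
  rw [reverse, natDegree_linRecCharPoly, linRecCharPoly, reflect_sub, reflect_monomial,
    revAt_le le_rfl, Nat.sub_self, pow_zero, hsum]
  refine congrArg _ (sum_congr rfl fun i hi => ?_)
  have := mem_Icc.1 hi
  rw [reflect_C_mul_X_pow, revAt_le (by omega), Nat.sub_sub_self this.2]

theorem eval_zero_linRecCharPoly {n : ℕ} (hn : 1 ≤ n) (b : ℕ → R) :
    (linRecCharPoly n b).eval 0 = -b n := by
  rw [linRecCharPoly, eval_sub, eval_finsetSum, sum_eq_single n]
  · simp [zero_pow (by omega : n ≠ 0)]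
  · intro i hi hin
    have := mem_Icc.1 hi
    simp [zero_pow (by omega : n - i ≠ 0)]
  · simp [hn]

theorem reverse_eq_prod_one_sub_C_mul_X_pow [IsAlgClosed K] [DecidableEq K] {P : K[X]}
    (hP : P.Monic) :
    P.reverse = ∏ μ ∈ P.roots.toFinset, (1 - C μ * X) ^ P.rootMultiplicity μ := by
  have h1 : reverse (1 : K[X]) = 1 := by simpa using reverse_C (1 : K)
  let ρ : K[X] →* K[X] :=
    { toFun := reverse
      map_one' := h1
      map_mul' := reverse_mul_of_domain }
  have hρ : ∀ μ : K, ρ (X - C μ) = 1 - C μ * X := fun μ => by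
    have hX : reverse (X : K[X]) = 1 := by simpa [h1] using reverse_mul_X (1 : K[X])
    change reverse (X - C μ) = _
    rw [sub_eq_add_neg, ← C_neg, reverse_add_C, hX, natDegree_X, pow_one, C_neg, neg_mul,
      ← sub_eq_add_neg]
  conv_lhs =>
    rw [(IsAlgClosed.splits P).eq_prod_roots_of_monic hP, prod_multiset_root_eq_finset_root]
  change ρ _ = _
  simp only [map_prod, map_pow, hρ]

theorem coe_one_sub_sum_mul_mk_eq_X_pow {n : ℕ} (hn : 1 ≤ n)
    (b : ℕ → R) (F : ℕ → R) (hinit : ∀ k < n - 1, F k = 0) (hlast : F (n - 1) = 1)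
    (hrec : ∀ k, n ≤ k → F k = ∑ i ∈ Icc 1 n, b i * F (k - i)) :
    ((1 - ∑ i ∈ Icc 1 n, C (b i) * X ^ i : R[X]) : R⟦X⟧) * PowerSeries.mk F =
      ((X ^ (n - 1) : R[X]) : R⟦X⟧) := by
  ext k
  push_cast
  rw [sub_mul, one_mul, sum_mul, map_sub, map_sum, PowerSeries.coeff_mk, PowerSeries.coeff_X_pow]
  simp_rw [mul_assoc, PowerSeries.coeff_C_mul, PowerSeries.coeff_X_pow_mul', PowerSeries.coeff_mk]
  rcases lt_or_ge k n with hk | hk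
  · rw [sum_eq_zero fun i hi => ?_]
    · rcases eq_or_ne k (n - 1) with rfl | hk'
      · simp [hlast]
      · simp [hinit k (by omega), hk']
    · split_ifs with hik
      · rw [hinit _ (by have := (mem_Icc.1 hi).1; omega), mul_zero]
      · rw [mul_zero]
  · rw [if_neg (by omega), hrec k hk, sub_eq_zero]
    exact sum_congr rfl fun i hi => by rw [if_pos ((mem_Icc.1 hi).2.trans hk)]

theorem ne_zero_of_isRoot_linRecCharPoly {n : ℕ} (hn : 1 ≤ n) {b : ℕ → R} (hbn : b n ≠ 0)
    {μ : R} (hμ : (linRecCharPoly n b).IsRoot μ) : μ ≠ 0 := by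
  rintro rfl
  rw [IsRoot, eval_zero_linRecCharPoly hn, neg_eq_zero] at hμ
  exact hbn hμ

theorem exists_eventually_eq_sum_choose_mul_pow_of_linRec [IsAlgClosed K] [DecidableEq K]
    {n : ℕ} (hn : 1 ≤ n) {b : ℕ → K} (hbn : b n ≠ 0) {P : K[X]} (hP : P = linRecCharPoly n b)
    {F : ℕ → K} (hinit : ∀ k < n - 1, F k = 0) (hlast : F (n - 1) = 1)
    (hrec : ∀ k, n ≤ k → F k = ∑ i ∈ Icc 1 n, b i * F (k - i)) :
    ∃ a : K → ℕ → K, (∀ μ, P.IsRoot μ → a μ (P.rootMultiplicity μ - 1) ≠ 0) ∧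
      ∀ᶠ k in atTop, F k = ∑ μ ∈ P.roots.toFinset, ∑ d ∈ range (P.rootMultiplicity μ),
        a μ d * ((k + d).choose d * μ ^ k) := by
  have hmon : P.Monic := hP ▸ linRecCharPoly_monic n b
  have hP0 : P ≠ 0 := hmon.ne_zero
  have hmem : ∀ μ, μ ∈ P.roots.toFinset ↔ P.IsRoot μ := fun μ => by simp [mem_roots hP0]
  have hs0 : ∀ μ ∈ P.roots.toFinset, μ ≠ 0 := fun μ hμ =>
    ne_zero_of_isRoot_linRecCharPoly hn hbn (hP ▸ (hmem μ).1 hμ)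
  have hF : ((∏ μ ∈ P.roots.toFinset, (1 - C μ * X) ^ P.rootMultiplicity μ : K[X]) : K⟦X⟧) *
      PowerSeries.mk F = ((X ^ (n - 1) : K[X]) : K⟦X⟧) := by
    rw [← reverse_eq_prod_one_sub_C_mul_X_pow hmon, hP, reverse_linRecCharPoly]
    exact coe_one_sub_sum_mul_mk_eq_X_pow hn b F hinit hlast hrec
  obtain ⟨μ₀, hμ₀⟩ := IsAlgClosed.exists_root P <| by
    rw [degree_eq_natDegree hP0, hP, natDegree_linRecCharPoly]
    exact_mod_cast (by omega : n ≠ 0)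
  obtain ⟨a, ha, hrep⟩ := exists_eventually_eq_sum_choose_mul_pow _ ⟨μ₀, (hmem μ₀).2 hμ₀⟩ hs0 _
    (fun μ hμ => (rootMultiplicity_pos hP0).2 ((hmem μ).1 hμ)) _ F hF
  refine ⟨a, fun μ hμ => left_ne_zero_of_mul ((ha μ ((hmem μ).2 hμ)).trans_ne ?_), hrep⟩
  simp [hs0 μ ((hmem μ).2 hμ)]

end LinearRecurrence

section Asymptotics

variable {𝕜 : Type*} [RCLike 𝕜]

theorem Nat.add_choose_le_add_choose {a b : ℕ} (hab : a ≤ b) (k : ℕ) :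
    (k + a).choose a ≤ (k + b).choose b := by
  rw [← Nat.choose_symm_add, ← Nat.choose_symm_add]
  exact Nat.choose_le_choose k (by omega)

theorem Nat.add_choose_mul_succ_le {d e : ℕ} (hde : d < e) (k : ℕ) :
    (k + d).choose d * (k + 1) ≤ (d + 1) * (k + e).choose e :=
  calc (k + d).choose d * (k + 1) ≤ (k + d + 1) * (k + d).choose d := by
        rw [mul_comm]; gcongr; omega
    _ = (k + (d + 1)).choose (d + 1) * (d + 1) := Nat.add_one_mul_choose_eq _ _
    _ ≤ (d + 1) * (k + e).choose e := by
        rw [mul_comm]; gcongr; exact Nat.add_choose_le_add_choose hde k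

theorem tendsto_choose_mul_pow_div_choose_mul_pow {μ l : 𝕜} {d e : ℕ} (hl : l ≠ 0)
    (h : ‖μ‖ < ‖l‖ ∨ ‖μ‖ ≤ ‖l‖ ∧ d < e) :
    Tendsto (fun k : ℕ => ((k + d).choose d * μ ^ k : 𝕜) / ((k + e).choose e * l ^ k))
      atTop (𝓝 0) := by
  have hC : ∀ k, (1 : ℝ) ≤ (k + e).choose e := fun k => by
    exact_mod_cast Nat.choose_pos (by omega)
  rcases h with hlt | ⟨hle, hde⟩
  · have hr : ‖μ / l‖ < 1 := by rwa [norm_div, div_lt_one (norm_pos_iff.2 hl)]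
    refine squeeze_zero_norm (a := fun k : ℕ => ‖((k + d).choose d : 𝕜) * (μ / l) ^ k‖)
      (fun k => ?_)
      (by simpa using (summable_choose_mul_geometric_of_norm_lt_one d hr).tendsto_atTop_zero.norm)
    have hk : ((k + d).choose d * μ ^ k : 𝕜) / ((k + e).choose e * l ^ k) =
        (k + d).choose d * (μ / l) ^ k / (k + e).choose e := by
      rw [div_pow]; field_simp
    rw [hk, norm_div, RCLike.norm_natCast (K := 𝕜) ((k + e).choose e)]
    exact div_le_self (norm_nonneg _) (hC k)
  · refine squeeze_zero_norm (a := fun k : ℕ => ((d : ℝ) + 1) / ((k + 1 : ℕ) : ℝ)) (fun k => ?_)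
      ((tendsto_const_div_atTop_nhds_zero_nat ((d : ℝ) + 1)).comp (tendsto_add_atTop_nat 1))
    have hpow : ‖μ‖ ^ k ≤ ‖l‖ ^ k := pow_le_pow_left₀ (norm_nonneg _) hle k
    have hpos : 0 < ‖l‖ ^ k := pow_pos (norm_pos_iff.2 hl) k
    have hnat : ((k + d).choose d : ℝ) * (k + 1) ≤ (d + 1) * (k + e).choose e := by
      exact_mod_cast Nat.add_choose_mul_succ_le hde k
    rw [norm_div, norm_mul, norm_mul, norm_pow, norm_pow, RCLike.norm_natCast,
      RCLike.norm_natCast, div_le_div_iff₀ (by nlinarith [hC k]) (by positivity)]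
    push_cast
    calc ((k + d).choose d : ℝ) * ‖μ‖ ^ k * (k + 1) ≤ (k + d).choose d * (k + 1) * ‖l‖ ^ k := by
          rw [mul_right_comm]; gcongr
      _ ≤ (d + 1) * (k + e).choose e * ‖l‖ ^ k := by gcongr
      _ = _ := by ring

theorem add_choose_mul_pow_ne_zero (e k : ℕ) {l : 𝕜} (hl : l ≠ 0) :
    ((k + e).choose e * l ^ k : 𝕜) ≠ 0 :=
  mul_ne_zero (Nat.cast_ne_zero.2 (Nat.choose_pos (by omega)).ne') (pow_ne_zero k hl)

theorem tendsto_sum_choose_mul_pow_div (s : Finset 𝕜) (m : 𝕜 → ℕ) (a : 𝕜 → ℕ → 𝕜) {l : 𝕜}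
    {e : ℕ} (hls : l ∈ s) (hl : l ≠ 0) (he : m l = e + 1) (hmax : ∀ μ ∈ s, ‖μ‖ ≤ ‖l‖)
    (huniq : ∀ μ ∈ s, ‖μ‖ = ‖l‖ → μ ≠ l → m μ < m l) :
    Tendsto (fun k : ℕ => (∑ μ ∈ s, ∑ d ∈ range (m μ), a μ d * ((k + d).choose d * μ ^ k)) /
      ((k + e).choose e * l ^ k)) atTop (𝓝 (a l e)) := by
  classical
  have hG := fun k => add_choose_mul_pow_ne_zero e k hl
  have hterm : ∀ μ ∈ s, ∀ d ∈ range (m μ),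
      Tendsto (fun k : ℕ => a μ d * ((k + d).choose d * μ ^ k / ((k + e).choose e * l ^ k)))
        atTop (𝓝 (if μ = l ∧ d = e then a l e else 0)) := by
    intro μ hμ d hd
    split_ifs with h
    · obtain ⟨rfl, rfl⟩ := h
      simp [div_self (hG _)]
    · rw [← mul_zero (a μ d)]
      refine (tendsto_choose_mul_pow_div_choose_mul_pow hl ?_).const_mul _
      have hd := mem_range.1 hd
      refine (hmax μ hμ).lt_or_eq.imp_right fun heq => ⟨heq.le, ?_⟩
      by_cases hμl : μ = l
      · subst hμl
        have : d ≠ e := fun hde => h ⟨rfl, hde⟩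
        omega
      · have := huniq μ hμ heq hμl
        omega
  have hsum := tendsto_finsetSum s fun μ hμ => tendsto_finsetSum _ (hterm μ hμ)
  rw [sum_eq_single l (fun μ _ hμl => by simp [hμl]) (absurd hls),
    sum_eq_single e (fun d _ hde => by simp [hde]) (by simp [he])] at hsum
  simp only [and_self, if_true] at hsum
  refine hsum.congr fun k => ?_
  simp only [sum_div, mul_div_assoc]

theorem tendsto_succ_div_of_tendsto_div {K : Type*} [NormedField K] {F G : ℕ → K} {c l : K}
    (hc : c ≠ 0) (hG : ∀ k, G k ≠ 0) (hFG : Tendsto (fun k => F k / G k) atTop (𝓝 c))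
    (hGl : Tendsto (fun k => G (k + 1) / G k) atTop (𝓝 l)) :
    (∀ᶠ k in atTop, F k ≠ 0) ∧ Tendsto (fun k => F (k + 1) / F k) atTop (𝓝 l) := by
  have hF : ∀ᶠ k in atTop, F k ≠ 0 :=
    (hFG.eventually_ne hc).mono fun k hk hF => hk (by rw [hF, zero_div])
  refine ⟨hF, ?_⟩
  have h := ((hFG.comp (tendsto_add_atTop_nat 1)).div hFG hc).mul hGl
  rw [div_self hc, one_mul] at h
  refine h.congr' (hF.mono fun k hk => ?_)
  change F (k + 1) / G (k + 1) / (F k / G k) * (G (k + 1) / G k) = F (k + 1) / F k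
  field_simp [hG k, hG (k + 1)]

theorem tendsto_choose_mul_pow_succ_div (e : ℕ) {l : 𝕜} (hl : l ≠ 0) :
    Tendsto (fun k : ℕ => ((k + 1 + e).choose e * l ^ (k + 1) : 𝕜) / ((k + e).choose e * l ^ k))
      atTop (𝓝 l) := by
  have hk : ∀ k : ℕ, ((k + 1 + e).choose e * l ^ (k + 1) : 𝕜) / ((k + e).choose e * l ^ k) =
      l / (((k + 1 : ℕ) : 𝕜) / ((k + 1 : ℕ) + e)) := fun k => by
    have hchoose : (k + 1 + e).choose e * (k + 1) = (k + e + 1) * (k + e).choose e := by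
      rw [← Nat.choose_symm_add, add_right_comm, ← Nat.choose_symm_add,
        Nat.add_one_mul_choose_eq]
    have hC : ((k + e).choose e : 𝕜) ≠ 0 := Nat.cast_ne_zero.2 (Nat.choose_pos (by omega)).ne'
    have hchoose' : ((k + 1 + e).choose e : 𝕜) * (k + 1) = (k + e + 1) * (k + e).choose e := by
      exact_mod_cast hchoose
    field_simp
    push_cast
    linear_combination l ^ (k + 1) * hchoose'
  have hlim : Tendsto (fun k : ℕ => ((k + 1 : ℕ) : 𝕜) / ((k + 1 : ℕ) + e)) atTop (𝓝 1) :=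
    (tendsto_natCast_div_add_atTop (e : 𝕜)).comp (tendsto_add_atTop_nat 1)
  have := (tendsto_const_nhds (x := l)).div hlim one_ne_zero
  rw [div_one] at this
  exact this.congr fun k => (hk k).symm

end Asymptotics

/-- If the characteristic polynomial
`P = X^n - ∑_{i=1}^n b_i X^(n-i)` is asymptotically simple with distinguished
root `lam0`, then the fundamental sequence `F0` generated from initial
conditions `(0, …, 0, 1)` is eventually nonzero and its ratio of consecutive
terms converges to `lam0`. -/
theorem fundamental_ratio_limit_of_asymptotically_simple
    (n : ℕ) (hn : 2 ≤ n) (b : ℕ → ℂ) (hbn : b n ≠ 0)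
    (P : Polynomial ℂ)
    (hP : P = Polynomial.X ^ n -
      ∑ i ∈ Finset.Icc 1 n, Polynomial.C (b i) * Polynomial.X ^ (n - i))
    (lam0 : ℂ)
    (hroot : P.IsRoot lam0)
    (hmax : ∀ μ : ℂ, P.IsRoot μ → ‖μ‖ ≤ ‖lam0‖)
    (huniq : ∀ μ : ℂ, P.IsRoot μ → ‖μ‖ = ‖lam0‖ → μ ≠ lam0 →
      Polynomial.rootMultiplicity μ P < Polynomial.rootMultiplicity lam0 P)
    (F0 : ℕ → ℂ)
    (h0init : ∀ k < n - 1, F0 k = 0) (h0last : F0 (n - 1) = 1)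
    (h0rec : ∀ k, n ≤ k → F0 k = ∑ i ∈ Finset.Icc 1 n, b i * F0 (k - i)) :
    ∃ k0 : ℕ, (∀ k > k0, F0 k ≠ 0) ∧
      Filter.Tendsto (fun k => F0 (k + 1) / F0 k) Filter.atTop (nhds lam0) := by
  classical
  replace hP : P = linRecCharPoly n b := hP
  have hP0 : P ≠ 0 := (hP ▸ linRecCharPoly_monic n b).ne_zero
  have hmem : ∀ μ, μ ∈ P.roots.toFinset ↔ P.IsRoot μ := fun μ => by simp [mem_roots hP0]
  have hl0 : lam0 ≠ 0 := ne_zero_of_isRoot_linRecCharPoly (by omega) hbn (hP ▸ hroot)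
  obtain ⟨a, ha0, hrep⟩ := exists_eventually_eq_sum_choose_mul_pow_of_linRec (by omega) hbn hP
    h0init h0last h0rec
  set e := P.rootMultiplicity lam0 - 1
  have hFG : Tendsto (fun k => F0 k / ((k + e).choose e * lam0 ^ k)) atTop (𝓝 (a lam0 e)) := by
    refine (tendsto_sum_choose_mul_pow_div _ _ a ((hmem lam0).2 hroot) hl0 ?_
      (fun μ hμ => hmax μ ((hmem μ).1 hμ)) (fun μ hμ => huniq μ ((hmem μ).1 hμ))).congr'
      (hrep.mono fun k hk => by simp only [hk])
    have := (rootMultiplicity_pos hP0).2 hroot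
    omega
  obtain ⟨hne, hratio⟩ := tendsto_succ_div_of_tendsto_div (ha0 lam0 hroot)
    (fun k => add_choose_mul_pow_ne_zero e k hl0) hFG (tendsto_choose_mul_pow_succ_div e hl0)
  obtain ⟨k0, hk0⟩ := eventually_atTop.1 hne
  exact ⟨k0, fun k hk => hk0 k hk.le, hratio⟩
end
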